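/- Let K = [[Q, Aᵀ],[A, 0]] where Q is symmetric n×n, A is m×n with rank m ≥ 1, and ZᵀQZ is positive definite for a null-space basis Z of A. Then K is indefinite: it has both a positive and a negative eigenvalue (indeed, inertia(K) = (n, m, 0)). -/

import Mathlib

/-!
With `A Y = 1`, the matrix `T = [[Z, Y], [-YᵀQZ, ½(1 - YᵀQY)]]` makes `Tᵀ K T = diag(ZᵀQZ, 1)`,
which is positive definite of size `(n - m) + m = n`, and `S = [[Y], [-½(1 + YᵀQY)]]` makes
`Sᵀ K S = -1` of size `m`. In an orthonormal eigenbasis the quadratic form of `K` is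
`∑ λᵢ cᵢ²`, so if it is positive definite on the range of `T`, no nonzero vector of that range
can have all its coordinates along positive eigenvalues vanish: hence at least `n` positive
eigenvalues, and likewise at least `m` negative ones. As `K` has size `n + m`, these bounds are
equalities and no eigenvalue vanishes.
-/

open Matrix Finset

theorem card_filter_pos_add_card_filter_neg_add_card_filter_eq_zero_eq_card {ι α : Type*}
    [Fintype ι] [LinearOrder α] [Zero α] (d : ι → α) :
    #{i | 0 < d i} + #{i | d i < 0} + #{i | d i = 0} = Fintype.card ι := by
  rw [card_filter, card_filter, card_filter, ← sum_add_distrib, ← sum_add_distrib, ← card_univ,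
    card_eq_sum_ones]
  refine sum_congr rfl fun i _ => ?_
  rcases lt_trichotomy (d i) 0 with h | h | h
  · simp [h, h.ne, h.not_gt]
  · simp [h]
  · simp [h, h.ne', h.not_gt]

theorem card_le_card_filter_pos_of_sum_mul_sq_pos {ι κ : Type*} [Fintype ι] [Fintype κ]
    (d : ι → ℝ) (c : (κ → ℝ) →ₗ[ℝ] (ι → ℝ)) (hc : ∀ x ≠ 0, 0 < ∑ i, d i * c x i ^ 2) :
    Fintype.card κ ≤ #{i | 0 < d i} := by
  let restrict := LinearMap.funLeft ℝ ℝ (Subtype.val : {i // 0 < d i} → ι) ∘ₗ c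
  have h_inj : Function.Injective restrict := by
    rw [← LinearMap.ker_eq_bot, LinearMap.ker_eq_bot']
    intro x hx
    by_contra hx0
    refine (hc x hx0).not_ge (sum_nonpos fun i _ => ?_)
    by_cases hi : 0 < d i
    · simp [show c x i = 0 from congrFun hx ⟨i, hi⟩]
    · exact mul_nonpos_of_nonpos_of_nonneg (not_lt.1 hi) (sq_nonneg _)
  simpa [Fintype.card_subtype] using LinearMap.finrank_le_finrank_of_injective h_inj

theorem Matrix.PosDef.fromBlocks_zero_zero {R m n : Type*} [CommRing R] [PartialOrder R]
    [StarRing R] [StarOrderedRing R] [Fintype m] [Fintype n]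
    {A : Matrix m m R} {D : Matrix n n R} (hA : A.PosDef) (hD : D.PosDef) :
    (fromBlocks A 0 0 D).PosDef := by
  refine of_dotProduct_mulVec_pos (hA.isHermitian.fromBlocks (by simp) hD.isHermitian)
    fun x hx => ?_
  obtain ⟨v, w, rfl⟩ : ∃ v w, x = Sum.elim v w := ⟨_, _, (Sum.elim_comp_inl_inr x).symm⟩
  simp only [fromBlocks_mulVec, zero_mulVec, add_zero, zero_add, Function.star_sumElim,
    sumElim_dotProduct_sumElim]
  rcases eq_or_ne v 0 with rfl | hv
  · have hw : w ≠ 0 := fun hw => hx (by rw [hw, Sum.elim_zero_zero])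
    simpa using hD.dotProduct_mulVec_pos hw
  · exact add_pos_of_pos_of_nonneg (hA.dotProduct_mulVec_pos hv)
      (hD.posSemidef.dotProduct_mulVec_nonneg _)

theorem Matrix.exists_mul_eq_one_of_rank_eq_card {K m n : Type*} [Field K] [Fintype m]
    [DecidableEq m] [Fintype n] {A : Matrix m n K} (hA : A.rank = Fintype.card m) :
    ∃ B : Matrix n m K, A * B = 1 := by
  refine mulVec_surjective_iff_exists_right_inverse.1 fun y => ?_
  have : LinearMap.range A.mulVecLin = ⊤ :=
    Submodule.eq_top_of_finrank_eq (hA.trans (Module.finrank_fintype_fun_eq_card K).symm)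
  exact LinearMap.range_eq_top.1 this y

namespace Matrix.IsHermitian

variable {ι κ : Type*} [Fintype ι] [DecidableEq ι] [Fintype κ] {K : Matrix ι ι ℝ}

theorem dotProduct_mulVec_eq_sum_eigenvalues_mul_sq (hK : K.IsHermitian) (x : ι → ℝ) :
    x ⬝ᵥ K *ᵥ x =
      ∑ i, hK.eigenvalues i * (star (hK.eigenvectorUnitary : Matrix ι ι ℝ) *ᵥ x) i ^ 2 := by
  set U : Matrix ι ι ℝ := (hK.eigenvectorUnitary : Matrix ι ι ℝ)
  have hKx : K *ᵥ x = U *ᵥ (diagonal hK.eigenvalues *ᵥ (star U *ᵥ x)) := by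
    conv_lhs => rw [hK.spectral_theorem, Unitary.conjStarAlgAut_apply]
    simp [U, mulVec_mulVec, Matrix.mul_assoc]
  rw [hKx, dotProduct_mulVec, ← mulVec_transpose, ← conjTranspose_eq_transpose_of_trivial,
    ← star_eq_conjTranspose, dotProduct]
  simp [mulVec_diagonal, sq, mul_left_comm]

theorem dotProduct_mulVec_transpose_mul_mul_eq_sum (hK : K.IsHermitian) (T : Matrix ι κ ℝ)
    (x : κ → ℝ) :
    x ⬝ᵥ (Tᵀ * K * T) *ᵥ x =
      ∑ i, hK.eigenvalues i * ((star (hK.eigenvectorUnitary : Matrix ι ι ℝ) * T) *ᵥ x) i ^ 2 := by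
  simp only [← mulVec_mulVec]
  rw [← hK.dotProduct_mulVec_eq_sum_eigenvalues_mul_sq, dotProduct_mulVec, vecMul_transpose]

theorem card_le_card_filter_eigenvalues_pos (hK : K.IsHermitian) {T : Matrix ι κ ℝ}
    (hT : (Tᵀ * K * T).PosDef) : Fintype.card κ ≤ #{i | 0 < hK.eigenvalues i} :=
  card_le_card_filter_pos_of_sum_mul_sq_pos _ (mulVecLin _) fun x hx => by
    simpa [hK.dotProduct_mulVec_transpose_mul_mul_eq_sum] using hT.dotProduct_mulVec_pos hx

theorem card_le_card_filter_eigenvalues_neg (hK : K.IsHermitian) {T : Matrix ι κ ℝ}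
    (hT : (-(Tᵀ * K * T)).PosDef) : Fintype.card κ ≤ #{i | hK.eigenvalues i < 0} := by
  simp_rw [← neg_pos (a := hK.eigenvalues _)]
  refine card_le_card_filter_pos_of_sum_mul_sq_pos _
    (mulVecLin (star (hK.eigenvectorUnitary : Matrix ι ι ℝ) * T)) fun x hx => ?_
  simpa [neg_mulVec, hK.dotProduct_mulVec_transpose_mul_mul_eq_sum] using
    hT.dotProduct_mulVec_pos hx

end Matrix.IsHermitian

section KKT

variable {𝕜 n m p : Type*} [Field 𝕜] [NeZero (2 : 𝕜)] [Fintype n] [Fintype m] [DecidableEq m]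
  {Q : Matrix n n 𝕜} {A : Matrix m n 𝕜} {Y : Matrix n m 𝕜}

theorem exists_transpose_mul_kkt_mul_eq_fromBlocks_one [Fintype p] (Z : Matrix n p 𝕜)
    (hQ : Q.IsSymm) (hAY : A * Y = 1) (hAZ : A * Z = 0) :
    ∃ T : Matrix (n ⊕ m) (p ⊕ m) 𝕜,
      Tᵀ * fromBlocks Q Aᵀ A 0 * T = fromBlocks (Zᵀ * Q * Z) 0 0 1 := by
  have hYA : Yᵀ * Aᵀ = 1 := by rw [← transpose_mul, hAY, transpose_one]
  have hZA : Zᵀ * Aᵀ = 0 := by rw [← transpose_mul, hAZ, transpose_zero]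
  refine ⟨fromBlocks Z Y (-(Yᵀ * Q * Z)) ((2⁻¹ : 𝕜) • (1 - Yᵀ * Q * Y)), ?_⟩
  rw [Matrix.mul_assoc, fromBlocks_multiply]
  simp only [hAZ, hAY, Matrix.zero_mul, add_zero]
  rw [fromBlocks_transpose, fromBlocks_multiply]
  simp only [Matrix.mul_add, Matrix.mul_neg, Matrix.mul_smul, Matrix.mul_zero, Matrix.mul_one,
    ← Matrix.mul_assoc, hYA, hZA, Matrix.zero_mul, Matrix.one_mul, transpose_neg, transpose_smul,
    transpose_mul, transpose_sub, transpose_one, transpose_transpose, hQ.eq, add_zero, smul_zero,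
    neg_zero, add_neg_cancel, add_assoc, ← add_smul, ← one_div, add_halves, one_smul,
    add_sub_cancel]

theorem exists_transpose_mul_kkt_mul_eq_neg_one (hQ : Q.IsSymm) (hAY : A * Y = 1) :
    ∃ S : Matrix (n ⊕ m) m 𝕜, Sᵀ * fromBlocks Q Aᵀ A 0 * S = -1 := by
  have hYA : Yᵀ * Aᵀ = 1 := by rw [← transpose_mul, hAY, transpose_one]
  refine ⟨fromRows Y (-((2⁻¹ : 𝕜) • (1 + Yᵀ * Q * Y))), ?_⟩
  rw [Matrix.mul_assoc, fromBlocks_mul_fromRows, transpose_fromRows, fromCols_mul_fromRows]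
  simp only [hAY, Matrix.zero_mul, add_zero, Matrix.mul_add, Matrix.mul_one, ← Matrix.mul_assoc,
    hYA, Matrix.one_mul, transpose_neg, transpose_smul, transpose_mul, transpose_add,
    transpose_one, transpose_transpose, hQ.eq]
  rw [add_assoc, ← neg_add, ← add_smul, ← one_div, add_halves, one_smul, neg_add_rev,
    add_neg_cancel_left]

end KKT

theorem kkt_matrix_indefinite_general {n m : ℕ}
    (Q : Matrix (Fin n) (Fin n) ℝ) (A : Matrix (Fin m) (Fin n) ℝ)
    (Z : Matrix (Fin n) (Fin (n - m)) ℝ)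
    (hQ : Q.IsSymm) (hA : A.rank = m) (hm : 1 ≤ m)
    (hAZ : A * Z = 0) (hZQZ : (Zᵀ * Q * Z).PosDef)
    (hK : (Matrix.fromBlocks Q Aᵀ A (0 : Matrix (Fin m) (Fin m) ℝ)).IsHermitian) :
    (∃ i, 0 < hK.eigenvalues i) ∧ (∃ j, hK.eigenvalues j < 0) ∧
    (Finset.univ.filter (fun i => 0 < hK.eigenvalues i)).card = n ∧
    (Finset.univ.filter (fun i => hK.eigenvalues i < 0)).card = m ∧
    (Finset.univ.filter (fun i => hK.eigenvalues i = 0)).card = 0 := by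
  have hmn : m ≤ n := hA ▸ A.rank_le_width
  obtain ⟨Y, hAY⟩ := A.exists_mul_eq_one_of_rank_eq_card (by simpa using hA)
  obtain ⟨T, hT⟩ := exists_transpose_mul_kkt_mul_eq_fromBlocks_one Z hQ hAY hAZ
  obtain ⟨S, hS⟩ := exists_transpose_mul_kkt_mul_eq_neg_one hQ hAY
  have hpos := hK.card_le_card_filter_eigenvalues_pos (hT ▸ hZQZ.fromBlocks_zero_zero .one)
  have hneg := hK.card_le_card_filter_eigenvalues_neg (T := S) (by rw [hS, neg_neg]; exact .one)
  have htotal :=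
    card_filter_pos_add_card_filter_neg_add_card_filter_eq_zero_eq_card hK.eigenvalues
  simp only [Fintype.card_sum, Fintype.card_fin] at hpos hneg htotal
  refine ⟨?_, ?_, by omega, by omega, by omega⟩
  · simpa [filter_nonempty_iff] using card_pos.1 (show 0 < #{i | 0 < hK.eigenvalues i} by omega)
  · simpa [filter_nonempty_iff] using card_pos.1 (show 0 < #{i | hK.eigenvalues i < 0} by omega)

theorem kkt_matrix_indefinite {n m : ℕ}
    (Q : Matrix (Fin n) (Fin n) ℝ) (A : Matrix (Fin m) (Fin n) ℝ)
    (Z : Matrix (Fin n) (Fin (n - m)) ℝ)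
    (hQ : Q.IsSymm) (hA : A.rank = m) (hm : 1 ≤ m) (hZrank : Z.rank = n - m)
    (hAZ : A * Z = 0) (hZQZ : (Zᵀ * Q * Z).PosDef)
    (hK : (Matrix.fromBlocks Q Aᵀ A (0 : Matrix (Fin m) (Fin m) ℝ)).IsHermitian) :
    (∃ i, 0 < hK.eigenvalues i) ∧ (∃ j, hK.eigenvalues j < 0) ∧
    (Finset.univ.filter (fun i => 0 < hK.eigenvalues i)).card = n ∧
    (Finset.univ.filter (fun i => hK.eigenvalues i < 0)).card = m ∧
    (Finset.univ.filter (fun i => hK.eigenvalues i = 0)).card = 0 :=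
  kkt_matrix_indefinite_general Q A Z hQ hA hm hAZ hZQZ hK
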